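/- Let p be a prime and let S be a subset of 𝔽_p with |S| ≥ 2. Then for every mod-p form ψ : 𝔽_p^n → 𝔽_p one has |𝔼_{x∈S^n} e^{2πi·ψ(x)/p}| ≤ (1 − p^{−2})^{|Z(ψ)|}, where the expectation is over x uniform in S^n and ψ(x) ∈ 𝔽_p is lifted to an integer in {0, 1, …, p−1} in the exponential. -/

import Mathlib

open Finset

/-- The support of a mod-p form given by its coefficient vector. -/
def supp {p n : ℕ} (φ : Fin n → ZMod p) : Finset (Fin n) :=
  Finset.univ.filter fun i => φ i ≠ 0

/-- Evaluation of a mod-p form (given by coefficients) at a point. -/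
def evalForm {p n : ℕ} (φ x : Fin n → ZMod p) : ZMod p := ∑ i, φ i * x i

/-- The sumset a₁S + ⋯ + a_mS. -/
def sumsetSub {p m : ℕ} (a : Fin m → ZMod p) (S : Finset (ZMod p)) : Finset (ZMod p) :=
  (Fintype.piFinset fun _ : Fin m => S).image fun s => ∑ i, a i * s i

/-- L(S,E): smallest L such that for all nonzero a₁,…,a_L the sumset a₁S+⋯+a_LS ⊄ E. -/
noncomputable def LSE {p : ℕ} (S E : Finset (ZMod p)) : ℕ :=
  sInf {L : ℕ | ∀ a : Fin L → ZMod p, (∀ i, a i ≠ 0) → ¬ sumsetSub a S ⊆ E}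

/-- β(p,S) = |S|^{-⌈(p-1)/(|S|-1)⌉}. -/
noncomputable def betaPS (p : ℕ) (S : Finset (ZMod p)) : ℝ :=
  ((S.card : ℝ) ^ ⌈((p : ℝ) - 1) / ((S.card : ℝ) - 1)⌉₊)⁻¹

/-!
The expectation factorizes over coordinates into `∏ i, 𝔼_{s ∈ S} e(ψ i · s)`, and the factors
with `ψ i = 0` equal `1`. For `a ≠ 0` expand `|∑_{s ∈ S} e(a s)|²` as
`∑_{s,t ∈ S} cos(2π a(s - t)/p)`: off the diagonal `a(s - t)` is a nonzero residue, so the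
cosine is at most `1 - 8/p²` (from `cos x ≤ 1 - 2x²/π²` on `[-π, π]`), and for `|S| ≥ 2` this
gives `|∑_{s ∈ S} e(a s)| ≤ |S|(1 - p⁻²)`.
-/

namespace AddChar

lemma map_sum_eq_prod {A M ι : Type*} [AddCommMonoid A] [CommMonoid M]
    (ψ : AddChar A M) (s : Finset ι) (f : ι → A) :
    ψ (∑ i ∈ s, f i) = ∏ i ∈ s, ψ (f i) :=
  map_prod ψ.toMonoidHom (fun i => Multiplicative.ofAdd (f i)) s

variable {G : Type*} [AddCommGroup G] [Finite G]

lemma norm_sum_sq_eq_sum_sum_re (ψ : AddChar G ℂ) (S : Finset G) :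
    ‖∑ s ∈ S, ψ s‖ ^ 2 = ∑ s ∈ S, ∑ t ∈ S, (ψ (s - t)).re := by
  have h : ((‖∑ s ∈ S, ψ s‖ ^ 2 : ℝ) : ℂ) = ∑ s ∈ S, ∑ t ∈ S, ψ (s - t) := by
    push_cast
    rw [← Complex.mul_conj', map_sum, sum_mul_sum]
    simp only [← map_neg_eq_conj, ← map_add_eq_mul, sub_eq_add_neg]
  rw [← Complex.ofReal_re (‖_‖ ^ 2), h]
  simp only [Complex.re_sum]

lemma norm_sum_sq_le_of_re_le (ψ : AddChar G ℂ) (S : Finset G) {δ : ℝ}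
    (hψ : ∀ s ∈ S, ∀ t ∈ S, s ≠ t → (ψ (s - t)).re ≤ 1 - δ) :
    ‖∑ s ∈ S, ψ s‖ ^ 2 ≤ (S.card : ℝ) ^ 2 - δ * S.card * (S.card - 1) := by
  classical
  rw [ψ.norm_sum_sq_eq_sum_sum_re]
  calc ∑ s ∈ S, ∑ t ∈ S, (ψ (s - t)).re
      ≤ ∑ s ∈ S, ∑ t ∈ S, (1 - δ + if s = t then δ else 0) := by
        gcongr with s hs t ht
        split_ifs with hst
        · simp [hst]
        · simpa using hψ s hs t ht hst
    _ = (S.card : ℝ) ^ 2 - δ * S.card * (S.card - 1) := by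
        simp only [sum_add_distrib, sum_const, sum_ite_eq, sum_ite_mem, inter_self, nsmul_eq_mul]
        ring

end AddChar

namespace ZMod

lemma re_stdAddChar_le {N : ℕ} [NeZero N] {b : ZMod N} (hb : b ≠ 0) :
    (stdAddChar b).re ≤ 1 - 8 / (N : ℝ) ^ 2 := by
  -- `valMinAbs` lifts `b` to `k` with `|k| ≤ N / 2`, putting the angle `2πk/N` in `[-π, π]`.
  obtain ⟨k, hkb⟩ : ∃ k : ℤ, k = b.valMinAbs := ⟨_, rfl⟩
  have hN : (0 : ℝ) < N := by have := NeZero.pos N; positivity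
  have hk : (1 : ℝ) ≤ (k : ℝ) ^ 2 := by
    have : k ≠ 0 := hkb ▸ (valMinAbs_eq_zero b).not.2 hb
    exact_mod_cast one_le_sq_iff_one_le_abs _ |>.2 (Int.one_le_abs this)
  have hkN : 2 * |(k : ℝ)| ≤ N := by
    have : (2 * k.natAbs : ℝ) ≤ N := by
      exact_mod_cast (by have := b.natAbs_valMinAbs_le; omega : 2 * k.natAbs ≤ N)
    rwa [Nat.cast_natAbs, Int.cast_abs] at this
  have hre : (stdAddChar b).re = Real.cos (2 * Real.pi * k / N) := by
    rw [← b.coe_valMinAbs, ← hkb, stdAddChar_coe, ← Complex.exp_ofReal_mul_I_re]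
    push_cast
    ring_nf
  have hx : |2 * Real.pi * k / N| ≤ Real.pi := by
    rw [abs_div, abs_mul, abs_of_pos hN, abs_of_pos (by positivity : (0 : ℝ) < 2 * Real.pi),
      div_le_iff₀ hN]
    nlinarith [Real.pi_pos]
  calc (stdAddChar b).re
      ≤ 1 - 2 / Real.pi ^ 2 * (2 * Real.pi * k / N) ^ 2 :=
        hre ▸ Real.cos_le_one_sub_mul_cos_sq hx
    _ = 1 - 8 * k ^ 2 / N ^ 2 := by field_simp; ring
    _ ≤ 1 - 8 / (N : ℝ) ^ 2 := by gcongr; linarith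

lemma norm_sum_stdAddChar_mul_le {p : ℕ} [Fact p.Prime] (S : Finset (ZMod p))
    (hS : 2 ≤ S.card) {a : ZMod p} (ha : a ≠ 0) :
    ‖∑ s ∈ S, stdAddChar (a * s)‖ ≤ S.card * (1 - ((p : ℝ)⁻¹) ^ 2) := by
  have hsq := (stdAddChar.mulShift a).norm_sum_sq_le_of_re_le S (δ := 8 / (p : ℝ) ^ 2)
    fun s _ t _ hst => re_stdAddChar_le (mul_ne_zero ha (sub_ne_zero.2 hst))
  simp only [AddChar.mulShift_apply] at hsq
  have hp : (1 : ℝ) ≤ p := by exact_mod_cast (Fact.out : p.Prime).one_lt.le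
  have hc : (2 : ℝ) ≤ S.card := by exact_mod_cast hS
  have hu : 0 ≤ ((p : ℝ)⁻¹) ^ 2 := by positivity
  have hu1 : ((p : ℝ)⁻¹) ^ 2 ≤ 1 :=
    pow_le_one₀ (by positivity) (inv_le_one_of_one_le₀ hp)
  rw [← pow_le_pow_iff_left₀ (norm_nonneg _) (by nlinarith) two_ne_zero]
  refine hsq.trans ?_
  rw [div_eq_mul_inv, ← inv_pow]
  nlinarith [mul_nonneg (mul_nonneg (by linarith : (0 : ℝ) ≤ S.card) hu)
      (by linarith : (0 : ℝ) ≤ 6 * S.card - 8),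
    sq_nonneg ((S.card : ℝ) * ((p : ℝ)⁻¹) ^ 2)]

end ZMod

lemma sum_piFinset_addChar_evalForm {p n : ℕ} {R : Type*} [CommSemiring R]
    (χ : AddChar (ZMod p) R) (S : Finset (ZMod p)) (ψ : Fin n → ZMod p) :
    ∑ x ∈ Fintype.piFinset (fun _ : Fin n => S), χ (evalForm ψ x) =
      ∏ i, ∑ s ∈ S, χ (ψ i * s) := by
  rw [prod_univ_sum]
  simp only [evalForm, AddChar.map_sum_eq_prod]

theorem stmt_1 {p n : ℕ} (hp : p.Prime) (S : Finset (ZMod p)) (hS : 2 ≤ S.card)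
    (ψ : Fin n → ZMod p) :
    ‖(∑ x ∈ Fintype.piFinset fun _ : Fin n => S,
        Complex.exp (2 * Real.pi * Complex.I * ((evalForm ψ x).val : ℂ) / (p : ℂ)))
        / (S.card : ℂ) ^ n‖
      ≤ (1 - ((p : ℝ)⁻¹) ^ 2) ^ (supp ψ).card := by
  have : Fact p.Prime := ⟨hp⟩
  have hc : (S.card : ℂ) ≠ 0 := by exact_mod_cast (by omega : S.card ≠ 0)
  simp_rw [← ZMod.toCircle_apply, ← ZMod.stdAddChar_apply, sum_piFinset_addChar_evalForm]
  calc ‖(∏ i, ∑ s ∈ S, ZMod.stdAddChar (ψ i * s)) / (S.card : ℂ) ^ n‖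
      = ∏ i, ‖(∑ s ∈ S, ZMod.stdAddChar (ψ i * s)) / S.card‖ := by
        rw [← norm_prod, prod_div_distrib, prod_const, card_univ, Fintype.card_fin]
    _ = ∏ i ∈ supp ψ, ‖(∑ s ∈ S, ZMod.stdAddChar (ψ i * s)) / S.card‖ := by
        rw [← prod_filter_mul_prod_filter_not univ (fun i => ψ i ≠ 0),
          prod_eq_one (s := univ.filter fun i => ¬ψ i ≠ 0) fun i hi => ?_, mul_one]
        · rfl
        · simp [of_not_not (mem_filter.1 hi).2, hc]
    _ ≤ ∏ _i ∈ supp ψ, (1 - ((p : ℝ)⁻¹) ^ 2) := by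
        refine prod_le_prod (fun i _ => norm_nonneg _) fun i hi => ?_
        rw [norm_div, Complex.norm_natCast, div_le_iff₀ (by positivity), mul_comm]
        exact ZMod.norm_sum_stdAddChar_mul_le S hS (mem_filter.1 hi).2
    _ = (1 - ((p : ℝ)⁻¹) ^ 2) ^ (supp ψ).card := prod_const _
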